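/- Suppose the first-stage channel w₁ attains the optimal value V₁ of Problem 1. Then the optimal value of Problem 2 equals V₁, and it is attained by the copy channel w(r̂|z,x) = 1 if r̂ = z and 0 otherwise (the copy channel is feasible because I(R̂₂;X) = I(R̂₂,Z;X) = I(Z;X) ≤ ε ≤ δ). Moreover, for every first-stage channel w₁ feasible for Problem 1, the optimal value of Problem 2 is at least V₁. -/
import Mathlib


open Real Finset

noncomputable section

variable {𝒳 ℛ ℛh : Type} [Fintype 𝒳] [Fintype ℛ] [Fintype ℛh] [DecidableEq ℛh]

/-- Marginal `p(x)` of the joint pmf `p(x,r)`. -/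
def pX (p : 𝒳 → ℛ → ℝ) (x : 𝒳) : ℝ := ∑ r, p x r

/-- Marginal `p(r)`. -/
def pR (p : 𝒳 → ℛ → ℝ) (r : ℛ) : ℝ := ∑ x, p x r

/-- `p` is a pmf on `𝒳 × ℛ`. -/
def IsPMF (p : 𝒳 → ℛ → ℝ) : Prop := (∀ x r, 0 ≤ p x r) ∧ ∑ x, ∑ r, p x r = 1

/-- A first-stage channel `w₁(r̂|x)`. -/
def IsChannel1 (w₁ : ℛh → 𝒳 → ℝ) : Prop :=
  (∀ rh x, 0 ≤ w₁ rh x ∧ w₁ rh x ≤ 1) ∧ ∀ x, ∑ rh, w₁ rh x = 1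

/-- A second-stage channel `w(r̂|z,x)` with `z` ranging over `ℛ̂`. -/
def IsChannel2 (w : ℛh → ℛh → 𝒳 → ℝ) : Prop :=
  (∀ rh z x, 0 ≤ w rh z x ∧ w rh z x ≤ 1) ∧ ∀ z x, ∑ rh, w rh z x = 1

/-- Mutual information `I(R̂₁;X)` under the joint pmf `w₁(r̂|x) p(x,r)`
(base-2 logs, convention `0·log₂0 = 0`). -/
def I1 (p : 𝒳 → ℛ → ℝ) (w₁ : ℛh → 𝒳 → ℝ) : ℝ :=
  ∑ rh, ∑ x, w₁ rh x * pX p x *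
    logb 2 (w₁ rh x * pX p x / ((∑ x', w₁ rh x' * pX p x') * pX p x))

/-- Expected distortion `E[d(R̂₁,R)]` of the first stage. -/
def dist1 (p : 𝒳 → ℛ → ℝ) (d : ℛh → ℛ → ℝ) (w₁ : ℛh → 𝒳 → ℝ) : ℝ :=
  ∑ rh, ∑ x, ∑ r, w₁ rh x * p x r * d rh r

/-- Feasibility for Problem 1: `w₁` a channel with `I(R̂₁;X) ≤ ε`. -/
def Feas1 (p : 𝒳 → ℛ → ℝ) (ε : ℝ) (w₁ : ℛh → 𝒳 → ℝ) : Prop :=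
  IsChannel1 w₁ ∧ I1 p w₁ ≤ ε

/-- Second-stage induced joint `q(r̂,z,x) = w(r̂|z,x) w₁(z|x) p(x)`. -/
def q2J (p : 𝒳 → ℛ → ℝ) (w₁ : ℛh → 𝒳 → ℝ) (w : ℛh → ℛh → 𝒳 → ℝ)
    (rh z : ℛh) (x : 𝒳) : ℝ :=
  w rh z x * w₁ z x * pX p x

/-- Mutual information `I(R̂₂;X)` of the second stage. -/
def I2RhX (p : 𝒳 → ℛ → ℝ) (w₁ : ℛh → 𝒳 → ℝ) (w : ℛh → ℛh → 𝒳 → ℝ) : ℝ :=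
  ∑ rh, ∑ x, (∑ z, q2J p w₁ w rh z x) *
    logb 2 ((∑ z, q2J p w₁ w rh z x) /
      ((∑ z, ∑ x', q2J p w₁ w rh z x') * pX p x))

/-- Mutual information `I(R̂₂,Z;X)` of the second stage. -/
def I2RhZX (p : 𝒳 → ℛ → ℝ) (w₁ : ℛh → 𝒳 → ℝ) (w : ℛh → ℛh → 𝒳 → ℝ) : ℝ :=
  ∑ rh, ∑ z, ∑ x, q2J p w₁ w rh z x *
    logb 2 (q2J p w₁ w rh z x / ((∑ x', q2J p w₁ w rh z x') * pX p x))

/-- Mutual information `I(Z;X)` where `Z = R̂₁` is induced by `w₁`. -/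
def IZX1 (p : 𝒳 → ℛ → ℝ) (w₁ : ℛh → 𝒳 → ℝ) : ℝ := I1 p w₁

/-- Expected distortion `E_q[d(R̂₂,R)]` of the second stage, under
`q(r̂,z,x,r) = w(r̂|z,x) w₁(z|x) p(x,r)`. -/
def dist2 (p : 𝒳 → ℛ → ℝ) (d : ℛh → ℛ → ℝ) (w₁ : ℛh → 𝒳 → ℝ)
    (w : ℛh → ℛh → 𝒳 → ℝ) : ℝ :=
  ∑ rh, ∑ z, ∑ x, ∑ r, w rh z x * w₁ z x * p x r * d rh r

/-- Feasibility for Problem 2: `w` a channel with `I(R̂₂;X) ≤ ε` and `I(R̂₂,Z;X) ≤ δ`. -/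
def Feas2 (p : 𝒳 → ℛ → ℝ) (ε δ : ℝ) (w₁ : ℛh → 𝒳 → ℝ) (w : ℛh → ℛh → 𝒳 → ℝ) : Prop :=
  IsChannel2 w ∧ I2RhX p w₁ w ≤ ε ∧ I2RhZX p w₁ w ≤ δ

/-- The copy channel `w(r̂|z,x) = 1` if `r̂ = z`, else `0`. -/
def copyCh : ℛh → ℛh → 𝒳 → ℝ := fun rh z _ => if rh = z then 1 else 0

lemma q2J_copy (p : 𝒳 → ℛ → ℝ) (w₁ : ℛh → 𝒳 → ℝ) (rh z : ℛh) (x : 𝒳) :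
    q2J p w₁ (copyCh : ℛh → ℛh → 𝒳 → ℝ) rh z x
      = if rh = z then w₁ z x * pX p x else 0 := by
  unfold q2J copyCh; split_ifs <;> ring

lemma sum_q2J_copy (p : 𝒳 → ℛ → ℝ) (w₁ : ℛh → 𝒳 → ℝ) (rh : ℛh) (x : 𝒳) :
    ∑ z, q2J p w₁ (copyCh : ℛh → ℛh → 𝒳 → ℝ) rh z x = w₁ rh x * pX p x := by
  simp [q2J_copy]

lemma copy_I2RhX (p : 𝒳 → ℛ → ℝ) (w₁ : ℛh → 𝒳 → ℝ) :
    I2RhX p w₁ (copyCh : ℛh → ℛh → 𝒳 → ℝ) = I1 p w₁ := by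
  unfold I2RhX I1
  refine Finset.sum_congr rfl fun rh _ => Finset.sum_congr rfl fun x _ => ?_
  have h : ∑ z, ∑ x', q2J p w₁ (copyCh : ℛh → ℛh → 𝒳 → ℝ) rh z x'
      = ∑ x', w₁ rh x' * pX p x' := by
    rw [Finset.sum_comm]
    exact Finset.sum_congr rfl fun x' _ => sum_q2J_copy p w₁ rh x'
  rw [sum_q2J_copy, h]

lemma copy_I2RhZX (p : 𝒳 → ℛ → ℝ) (w₁ : ℛh → 𝒳 → ℝ) :
    I2RhZX p w₁ (copyCh : ℛh → ℛh → 𝒳 → ℝ) = I1 p w₁ := by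
  unfold I2RhZX I1
  refine Finset.sum_congr rfl fun rh _ => ?_
  rw [Finset.sum_eq_single rh]
  · refine Finset.sum_congr rfl fun x _ => ?_
    simp [q2J_copy]
  · intro z _ hz
    apply Finset.sum_eq_zero; intro x _
    rw [q2J_copy, if_neg (fun h => hz h.symm), zero_mul]
  · simp

lemma copy_dist2 (p : 𝒳 → ℛ → ℝ) (d : ℛh → ℛ → ℝ) (w₁ : ℛh → 𝒳 → ℝ) :
    dist2 p d w₁ (copyCh : ℛh → ℛh → 𝒳 → ℝ) = dist1 p d w₁ := by
  unfold dist2 dist1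
  refine Finset.sum_congr rfl fun rh _ => ?_
  rw [Finset.sum_eq_single rh]
  · refine Finset.sum_congr rfl fun x _ => Finset.sum_congr rfl fun r _ => ?_
    simp [copyCh]
  · intro z _ hz
    apply Finset.sum_eq_zero; intro x _
    apply Finset.sum_eq_zero; intro r _
    simp [copyCh, Ne.symm hz]
  · simp

/-- Composite channel: `w₁''(r̂|x) = ∑ z w(r̂|z,x) w₁'(z|x)`. -/
def compCh (w₁ : ℛh → 𝒳 → ℝ) (w : ℛh → ℛh → 𝒳 → ℝ) (rh : ℛh) (x : 𝒳) : ℝ :=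
  ∑ z, w rh z x * w₁ z x

lemma compCh_isChannel {w₁ : ℛh → 𝒳 → ℝ} {w : ℛh → ℛh → 𝒳 → ℝ}
    (h₁ : IsChannel1 w₁) (h₂ : IsChannel2 w) : IsChannel1 (compCh w₁ w) := by
  obtain ⟨h1b, h1s⟩ := h₁; obtain ⟨h2b, h2s⟩ := h₂
  constructor
  · intro rh x
    constructor
    · exact Finset.sum_nonneg fun z _ => mul_nonneg (h2b rh z x).1 (h1b z x).1
    · calc ∑ z, w rh z x * w₁ z x ≤ ∑ z, 1 * w₁ z x := by
            apply Finset.sum_le_sum; intro z _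
            exact mul_le_mul_of_nonneg_right (h2b rh z x).2 (h1b z x).1
        _ = 1 := by simp [h1s x]
  · intro x
    unfold compCh
    rw [Finset.sum_comm]
    calc ∑ z, ∑ rh, w rh z x * w₁ z x = ∑ z, (∑ rh, w rh z x) * w₁ z x := by
          simp [Finset.sum_mul]
      _ = 1 := by simp only [h2s]; simp [h1s x]

lemma sum_q2J_comp (p : 𝒳 → ℛ → ℝ) (w₁ : ℛh → 𝒳 → ℝ) (w : ℛh → ℛh → 𝒳 → ℝ)
    (rh : ℛh) (x : 𝒳) :
    ∑ z, q2J p w₁ w rh z x = compCh w₁ w rh x * pX p x := by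
  unfold q2J compCh
  rw [Finset.sum_mul]

lemma comp_I1 (p : 𝒳 → ℛ → ℝ) (w₁ : ℛh → 𝒳 → ℝ) (w : ℛh → ℛh → 𝒳 → ℝ) :
    I1 p (compCh w₁ w) = I2RhX p w₁ w := by
  unfold I2RhX I1
  refine Finset.sum_congr rfl fun rh _ => Finset.sum_congr rfl fun x _ => ?_
  have h : ∑ z, ∑ x', q2J p w₁ w rh z x' = ∑ x', compCh w₁ w rh x' * pX p x' := by
    rw [Finset.sum_comm]
    exact Finset.sum_congr rfl fun x' _ => sum_q2J_comp p w₁ w rh x'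
  rw [sum_q2J_comp, h]

lemma comp_dist (p : 𝒳 → ℛ → ℝ) (d : ℛh → ℛ → ℝ) (w₁ : ℛh → 𝒳 → ℝ)
    (w : ℛh → ℛh → 𝒳 → ℝ) :
    dist1 p d (compCh w₁ w) = dist2 p d w₁ w := by
  unfold dist1 dist2 compCh
  refine Finset.sum_congr rfl fun rh _ => ?_
  simp_rw [Finset.sum_mul]
  trans ∑ x, ∑ z, ∑ r, w rh z x * w₁ z x * p x r * d rh r
  · exact Finset.sum_congr rfl fun x _ => Finset.sum_comm
  · exact Finset.sum_comm

/-- Suppose the first-stage channel `w₁` attains the optimal value `V₁`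
of Problem 1.  Then the optimal value of Problem 2 equals `V₁`, attained by the copy
channel, which is feasible because `I(R̂₂;X) = I(R̂₂,Z;X) = I(Z;X) ≤ ε ≤ δ`.  Moreover,
for every first-stage channel `w₁'` feasible for Problem 1, the optimal value of
Problem 2 is at least `V₁`. -/
theorem statement9
    (p : 𝒳 → ℛ → ℝ) (hp : IsPMF p)
    (d : ℛh → ℛ → ℝ) (hd : ∀ rh r, 0 ≤ d rh r)
    (ε δ : ℝ) (hε : 0 ≤ ε) (hεδ : ε ≤ δ)
    (w₁ : ℛh → 𝒳 → ℝ) (V₁ : ℝ)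
    (hfeas : Feas1 p ε w₁)
    (hval : dist1 p d w₁ = V₁)
    (hopt : ∀ w₁' : ℛh → 𝒳 → ℝ, Feas1 p ε w₁' → V₁ ≤ dist1 p d w₁') :
    -- the copy channel is feasible, with I(R̂₂;X) = I(R̂₂,Z;X) = I(Z;X)
    (I2RhX p w₁ (copyCh : ℛh → ℛh → 𝒳 → ℝ) = IZX1 p w₁ ∧
     I2RhZX p w₁ (copyCh : ℛh → ℛh → 𝒳 → ℝ) = IZX1 p w₁ ∧
     Feas2 p ε δ w₁ (copyCh : ℛh → ℛh → 𝒳 → ℝ)) ∧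
    -- it attains the optimal value V₁ of Problem 2
    dist2 p d w₁ (copyCh : ℛh → ℛh → 𝒳 → ℝ) = V₁ ∧
    (∀ w : ℛh → ℛh → 𝒳 → ℝ, Feas2 p ε δ w₁ w → V₁ ≤ dist2 p d w₁ w) ∧
    -- moreover, for every feasible first-stage channel the optimal value of
    -- Problem 2 is at least V₁
    (∀ w₁' : ℛh → 𝒳 → ℝ, Feas1 p ε w₁' →
      ∀ w : ℛh → ℛh → 𝒳 → ℝ, Feas2 p ε δ w₁' w → V₁ ≤ dist2 p d w₁' w) := by
  obtain ⟨hch1, hI1⟩ := hfeas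
  have hcopych : IsChannel2 (copyCh : ℛh → ℛh → 𝒳 → ℝ) := by
    constructor
    · intro rh z x; unfold copyCh; split_ifs <;> norm_num
    · intro z x; simp [copyCh]
  have hmain : ∀ w₁' : ℛh → 𝒳 → ℝ, Feas1 p ε w₁' →
      ∀ w : ℛh → ℛh → 𝒳 → ℝ, Feas2 p ε δ w₁' w → V₁ ≤ dist2 p d w₁' w := by
    intro w₁' hf1 w hf2
    obtain ⟨hch, hIa, hIb⟩ := hf2
    have hcomp : Feas1 p ε (compCh w₁' w) :=
      ⟨compCh_isChannel hf1.1 hch, by rw [comp_I1]; exact hIa⟩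
    have := hopt _ hcomp
    rwa [comp_dist] at this
  refine ⟨⟨copy_I2RhX p w₁, copy_I2RhZX p w₁, hcopych, ?_, ?_⟩, ?_, ?_, hmain⟩
  · rw [copy_I2RhX]; exact hI1
  · rw [copy_I2RhZX]; exact le_trans hI1 hεδ
  · rw [copy_dist2]; exact hval
  · intro w hw; exact hmain w₁ ⟨hch1, hI1⟩ w hw


end
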